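/- arXiv:2509.20404 — 6 statements merged into one kernel-verified Lean document; each statement's English description precedes it below -/
import Mathlib

section
/- For every $n \in \mathbb{N}$ and every $t \in \mathbb{N}_+$, any bipartite graph with $n$ vertices on each side containing no copy of $K_{t,t}$ (respecting the bipartition) has at most $(t-1)^{1/t} \cdot n^{2-1/t} + (t-1) \cdot n$ edges. -/
/-! Count the pairs `(S, b)` where `S` is a `t`-set of left vertices contained in the
neighbourhood of the right vertex `b`. As there is no `K_{t,t}`, each `S` lies in at most `t - 1`
neighbourhoods, so `∑_b C(d_b, t) ≤ (t - 1) C(n, t)`. Since `(d + 1 - t)^t ≤ t! C(d, t)` and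
`t! C(n, t) ≤ n^t`, this gives `∑_b (d_b + 1 - t)^t ≤ (t - 1) n^t`, and the power mean inequality
`(∑_b x_b)^t ≤ n^(t-1) ∑_b x_b^t` turns it into `∑_b (d_b + 1 - t) ≤ (t-1)^(1/t) n^(2-1/t)`.
The degrees `d_b` exceed these truncated ones by at most `t - 1` each. -/

open Finset

namespace KovariSosTuran

theorem sum_pow_add_one_sub_le_of_sum_choose_le {ι : Type*} (s : Finset ι) (d : ι → ℕ)
    {t m n : ℕ} (h : ∑ i ∈ s, (d i).choose t ≤ m * n.choose t) :
    ∑ i ∈ s, (d i + 1 - t) ^ t ≤ m * n ^ t :=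
  calc ∑ i ∈ s, (d i + 1 - t) ^ t
      ≤ ∑ i ∈ s, t.factorial * (d i).choose t := sum_le_sum fun i _ =>
        (Nat.pow_sub_le_descFactorial _ _).trans (Nat.descFactorial_eq_factorial_mul_choose _ _).le
    _ = t.factorial * ∑ i ∈ s, (d i).choose t := (mul_sum _ _ _).symm
    _ ≤ t.factorial * (m * n.choose t) := Nat.mul_le_mul_left _ h
    _ = m * n.descFactorial t := by rw [Nat.descFactorial_eq_factorial_mul_choose]; ring
    _ ≤ m * n ^ t := Nat.mul_le_mul_left _ (Nat.descFactorial_le_pow n t)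

theorem sum_le_of_sum_pow_le {ι : Type*} (s : Finset ι) {x : ι → ℝ} (hx : ∀ i ∈ s, 0 ≤ x i)
    {t : ℕ} (ht : 1 ≤ t) {c : ℝ} (hc : 0 ≤ c) (h : ∑ i ∈ s, x i ^ t ≤ c * (#s : ℝ) ^ t) :
    ∑ i ∈ s, x i ≤ c ^ ((1 : ℝ) / t) * (#s : ℝ) ^ (2 - (1 : ℝ) / t) := by
  obtain ⟨k, rfl⟩ := Nat.exists_eq_add_of_le' ht
  have hsum : (∑ i ∈ s, x i) ^ (k + 1) ≤ c * (#s : ℝ) ^ (2 * k + 1) :=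
    calc (∑ i ∈ s, x i) ^ (k + 1) ≤ (#s : ℝ) ^ k * ∑ i ∈ s, x i ^ (k + 1) :=
          pow_sum_le_card_mul_sum_pow hx k
      _ ≤ (#s : ℝ) ^ k * (c * (#s : ℝ) ^ (k + 1)) := by gcongr
      _ = c * (#s : ℝ) ^ (2 * k + 1) := by ring
  have hbound : (c ^ ((1 : ℝ) / (k + 1 : ℕ)) * (#s : ℝ) ^ (2 - (1 : ℝ) / (k + 1 : ℕ))) ^ (k + 1)
      = c * (#s : ℝ) ^ (2 * k + 1) := by
    rw [mul_pow, one_div, Real.rpow_inv_natCast_pow hc k.succ_ne_zero,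
      ← Real.rpow_mul_natCast (Nat.cast_nonneg _), ← Real.rpow_natCast _ (2 * k + 1)]
    congr 2
    push_cast
    field_simp
    ring
  rw [← hbound] at hsum
  exact le_of_pow_le_pow_left₀ k.succ_ne_zero (by positivity) hsum

variable {α β : Type*} [Fintype α] [Fintype β] [DecidableEq α] [DecidableEq β]

def leftNeighbors (E : Finset (α × β)) (b : β) : Finset α := {a | (a, b) ∈ E}

theorem card_eq_sum_card_leftNeighbors (E : Finset (α × β)) :
    #E = ∑ b, #(leftNeighbors E b) := by
  rw [← filter_univ_mem E, card_filter, ← univ_product_univ, sum_product_right]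
  simp_rw [leftNeighbors, card_filter, mem_filter, mem_product, mem_univ, true_and]

theorem card_filter_subset_leftNeighbors_lt {E : Finset (α × β)} {t : ℕ}
    (hfree : ¬ ∃ (A : Finset α) (B : Finset β), #A = t ∧ #B = t ∧
      ∀ a ∈ A, ∀ b ∈ B, (a, b) ∈ E)
    {S : Finset α} (hS : #S = t) : #{b | S ⊆ leftNeighbors E b} < t := by
  by_contra! h
  obtain ⟨B, hB, hBcard⟩ := exists_subset_card_eq h
  refine hfree ⟨S, B, hS, hBcard, fun a ha b hb => ?_⟩
  simpa [leftNeighbors] using (mem_filter.mp (hB hb)).2 ha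

theorem sum_choose_card_leftNeighbors_le (E : Finset (α × β)) {t m : ℕ}
    (h : ∀ S : Finset α, #S = t → #{b | S ⊆ leftNeighbors E b} ≤ m) :
    ∑ b, (#(leftNeighbors E b)).choose t ≤ m * (Fintype.card α).choose t := by
  let r : Finset α → β → Prop := fun S b => S ⊆ leftNeighbors E b
  calc ∑ b, (#(leftNeighbors E b)).choose t
      = ∑ b, #((powersetCard t univ).bipartiteBelow r b) := by
        refine sum_congr rfl fun b _ => ?_
        rw [← card_powersetCard]
        congr 1
        ext S
        simp [r, mem_powersetCard, and_comm]
    _ = ∑ S ∈ powersetCard t univ, #(univ.bipartiteAbove r S) :=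
        (sum_card_bipartiteAbove_eq_sum_card_bipartiteBelow r).symm
    _ ≤ ∑ S ∈ powersetCard t univ, m :=
        sum_le_sum fun S hS => h S (mem_powersetCard.mp hS).2
    _ = m * (Fintype.card α).choose t := by simp [mul_comm]

end KovariSosTuran

open KovariSosTuran in
/-- Kővári–Sós–Turán: a bipartite graph with `n` vertices on each side and no copy of
`K_{t,t}` has at most `(t-1)^(1/t) * n^(2-1/t) + (t-1) * n` edges. -/
theorem stmt1 (n t : ℕ) (ht : 1 ≤ t) (E : Finset (Fin n × Fin n))
    (hfree : ¬ ∃ (A B : Finset (Fin n)), A.card = t ∧ B.card = t ∧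
      ∀ a ∈ A, ∀ b ∈ B, (a, b) ∈ E) :
    (E.card : ℝ) ≤ ((t : ℝ) - 1) ^ ((1 : ℝ) / t) * (n : ℝ) ^ (2 - (1 : ℝ) / t)
      + ((t : ℝ) - 1) * n := by
  set d : Fin n → ℕ := fun b => #(leftNeighbors E b)
  have hchoose := sum_choose_card_leftNeighbors_le E (m := t - 1) fun S hS =>
    Nat.le_sub_one_of_lt (card_filter_subset_leftNeighbors_lt hfree hS)
  have hpow := sum_pow_add_one_sub_le_of_sum_choose_le univ d hchoose
  have hdeg : #E ≤ ∑ b, (d b + 1 - t) + (t - 1) * n :=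
    calc #E = ∑ b, d b := card_eq_sum_card_leftNeighbors E
      _ ≤ ∑ b, ((d b + 1 - t) + (t - 1)) := sum_le_sum fun b _ => by omega
      _ = ∑ b, (d b + 1 - t) + (t - 1) * n := by simp [sum_add_distrib, mul_comm]
  have hsum := sum_le_of_sum_pow_le (x := fun b => ((d b + 1 - t : ℕ) : ℝ)) univ
    (fun _ _ => Nat.cast_nonneg _) ht (c := t - 1) (by simpa using ht)
    (by simpa [Nat.cast_sub ht] using (Nat.cast_le (α := ℝ)).mpr hpow)
  have hdeg_real : (#E : ℝ) ≤ ∑ b, ((d b + 1 - t : ℕ) : ℝ) + ((t : ℝ) - 1) * n := by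
    simpa [Nat.cast_sub ht] using (Nat.cast_le (α := ℝ)).mpr hdeg
  simp only [card_univ, Fintype.card_fin] at hsum
  linarith
end

section
/- If $W$ is a finite set, $A_1, \ldots, A_n \subseteq W$, and $t \in \{1, \ldots, n\}$, then there exists a $t$-element subset $I \subseteq \{1, \ldots, n\}$ such that $\left|\bigcap_{i \in I} A_i\right| \ge \frac{1}{(n)_t \cdot |W|^{t-1}} \left(\sum_{i=1}^n |A_i|\right)^t - \left(\frac{n^t}{(n)_t} - 1\right) \max_{i \in [n]} |A_i|$, where $(n)_t = n(n-1)\cdots(n-t+1)$ is the falling factorial. -/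
/-!
Count the pairs `(f, w)` with `f : Fin t → Fin n` and `w ∈ ⋂ⱼ A (f j)` in two ways. Grouping by
`w` gives `∑_w d(w)^t`, where `d(w)` is the number of sets containing `w`; since
`∑_w d(w) = ∑_i |Aᵢ|`, the power mean inequality bounds this from below by
`(∑_i |Aᵢ|)^t / |W|^(t-1)`. Grouping by `f`, each of the `(n)_t` injective tuples contributes at
most the largest `t`-fold intersection, and each of the other `n^t - (n)_t` tuples at most
`maxᵢ |Aᵢ|`.
-/

open Finset

theorem card_filter_injective_eq_descFactorial (κ ι : Type*) [Fintype κ] [Fintype ι]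
    [DecidableEq κ] [DecidableEq ι] :
    #({f | Function.Injective f} : Finset (κ → ι))
      = (Fintype.card ι).descFactorial (Fintype.card κ) := by
  rw [← Fintype.card_subtype, Fintype.card_congr (Equiv.subtypeInjectiveEquivEmbedding κ ι),
    Fintype.card_embedding_eq]

section IntersectionCounting

variable {W ι : Type*} [Fintype W] [DecidableEq W] [Fintype ι]

def memberCount (A : ι → Finset W) (w : W) : ℕ := #{i | w ∈ A i}

theorem sum_memberCount (A : ι → Finset W) : ∑ w, memberCount A w = ∑ i, #(A i) := by
  simp only [memberCount, card_filter]
  rw [sum_comm]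
  simp

theorem sum_card_inf_comp_eq_sum_memberCount_pow {κ : Type*} [Fintype κ] [DecidableEq κ]
    (A : ι → Finset W) :
    ∑ f : κ → ι, #(univ.inf (A ∘ f)) = ∑ w, memberCount A w ^ Fintype.card κ := by
  have hinf (f : κ → ι) : #(univ.inf (A ∘ f)) = ∑ w, if ∀ j, w ∈ A (f j) then 1 else 0 := by
    rw [← card_filter]; congr 1; ext w; simp [mem_inf]
  simp only [hinf]
  rw [sum_comm]
  refine sum_congr rfl fun w _ => ?_
  have htuples : ({f | ∀ j, w ∈ A (f j)} : Finset (κ → ι))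
      = Fintype.piFinset fun _ => ({i | w ∈ A i} : Finset ι) := by
    ext f; simp [Fintype.mem_piFinset]
  rw [← card_filter, htuples, Fintype.card_piFinset, prod_const, card_univ, memberCount]

theorem card_inf_comp_le_sup {κ : Type*} [Fintype κ] [Nonempty κ] (A : ι → Finset W)
    (f : κ → ι) : #(univ.inf (A ∘ f)) ≤ univ.sup fun i => #(A i) :=
  let j := Classical.arbitrary κ
  (card_le_card (inf_le (mem_univ j))).trans (le_sup (f := fun i => #(A i)) (mem_univ (f j)))

theorem sum_memberCount_pow_le [DecidableEq ι] {κ : Type*} [Fintype κ] [DecidableEq κ]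
    [Nonempty κ] (A : ι → Finset W) {C : ℕ}
    (hC : ∀ J : Finset ι, #J = Fintype.card κ → #(J.inf A) ≤ C) :
    ∑ w, memberCount A w ^ Fintype.card κ
      ≤ (Fintype.card ι).descFactorial (Fintype.card κ) * C
        + (Fintype.card ι ^ Fintype.card κ - (Fintype.card ι).descFactorial (Fintype.card κ))
          * univ.sup fun i => #(A i) := by
  have hinj := card_filter_injective_eq_descFactorial κ ι
  have hnoninj : #({f | ¬Function.Injective f} : Finset (κ → ι))
      = Fintype.card ι ^ Fintype.card κ - (Fintype.card ι).descFactorial (Fintype.card κ) := by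
    rw [filter_not, card_sdiff_of_subset (filter_subset _ _), hinj, card_univ, Fintype.card_fun]
  rw [← sum_card_inf_comp_eq_sum_memberCount_pow, ← sum_filter_add_sum_filter_not univ
    Function.Injective, ← hnoninj, ← hinj, ← smul_eq_mul, ← smul_eq_mul]
  refine add_le_add (sum_le_card_nsmul _ _ _ fun f hf => ?_)
    (sum_le_card_nsmul _ _ _ fun f _ => card_inf_comp_le_sup A f)
  have hf : Function.Injective f := (mem_filter.1 hf).2
  rw [← inf_image]
  exact hC _ (by rw [card_image_of_injective _ hf, card_univ])

theorem sum_card_pow_div_le_sum_memberCount_pow (A : ι → Finset W) (s : ℕ) :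
    (∑ i, (#(A i) : ℝ)) ^ (s + 1) / (Fintype.card W : ℝ) ^ s
      ≤ ∑ w, (memberCount A w : ℝ) ^ (s + 1) := by
  have := pow_sum_div_card_le_sum_pow (s := univ) (f := fun w => (memberCount A w : ℝ))
    (fun _ _ => Nat.cast_nonneg _) s
  rwa [← Nat.cast_sum, sum_memberCount, Nat.cast_sum, card_univ] at this

end IntersectionCounting

/-- Erdős' intersection lemma: among `A₁, …, Aₙ ⊆ W` there are `t` sets with large
common intersection. -/
theorem stmt2 {W : Type*} [Fintype W] [DecidableEq W] (n t : ℕ)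
    (ht : 1 ≤ t) (htn : t ≤ n) (A : Fin n → Finset W) :
    ∃ I : Finset (Fin n), I.card = t ∧
      (∑ i, ((A i).card : ℝ)) ^ t / ((n.descFactorial t : ℝ) * (Fintype.card W : ℝ) ^ (t - 1))
        - ((n : ℝ) ^ t / (n.descFactorial t : ℝ) - 1) *
          ((Finset.univ.sup fun i => (A i).card : ℕ) : ℝ)
      ≤ ((I.inf A).card : ℝ) := by
  obtain ⟨I, hI, hImax⟩ := exists_max_image (powersetCard t univ) (fun J => #(J.inf A))
    (powersetCard_nonempty.2 (by simpa using htn))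
  refine ⟨I, mem_powersetCard_univ.1 hI, ?_⟩
  have : Nonempty (Fin t) := ⟨⟨0, ht⟩⟩
  have hcount := sum_memberCount_pow_le A (κ := Fin t)
    fun J hJ => hImax J (mem_powersetCard_univ.2 (by simpa using hJ))
  simp only [Fintype.card_fin] at hcount
  have hcount' := (Nat.cast_le (α := ℝ)).2 hcount
  push_cast [Nat.cast_sub (Nat.descFactorial_le_pow n t)] at hcount'
  obtain ⟨s, rfl⟩ : ∃ s, t = s + 1 := ⟨t - 1, by omega⟩
  have hD : (0 : ℝ) < n.descFactorial (s + 1) := by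
    exact_mod_cast Nat.descFactorial_pos.2 htn
  have hkey := (sum_card_pow_div_le_sum_memberCount_pow A s).trans hcount'
  rw [Nat.add_sub_cancel, div_mul_eq_div_div_swap]
  field_simp
  linarith
end

section
/- For every $n, k, t \in \mathbb{N}_+$ with $k \ge 2$ and $t \le n$, the partite extremal number satisfies $\mathrm{ex}_{k\text{-part}}(n, K^{(k)}_{t,\ldots,t}) \le \left(\mathrm{ex}_{(k-1)\text{-part}}(n, K^{(k-1)}_{t,\ldots,t}) + t(t-1) n^{k-2}\right)^{1/t} \cdot n^{k-(k-1)/t}$. -/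
/-- A `k`-partite `k`-hypergraph on `n` vertices per part (edges are transversals)
contains a copy of the complete `k`-partite hypergraph with `t` vertices per part. -/
def HasGridCopy (n k t : ℕ) (E : Finset (Fin k → Fin n)) : Prop :=
  ∃ α : Fin k → Fin t → Fin n, (∀ i, Function.Injective (α i)) ∧
    ∀ β : Fin k → Fin t, (fun i => α i (β i)) ∈ E

/-- The partite extremal number `ex_{k-part}(n, K^{(k)}_{t,…,t})`. -/
noncomputable def exPartite (n k t : ℕ) : ℕ :=
  sSup {c | ∃ E : Finset (Fin k → Fin n), ¬ HasGridCopy n k t E ∧ c = E.card}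

/-!
Let `E` be a `k`-partite `k`-graph without `K_{t,…,t}`. For a `(k-1)`-tuple `e` of the first
`k - 1` parts let `d(e)` be the number of vertices `v` of the last part with `e ∪ {v} ∈ E`.
For any `t` distinct vertices of the last part, the `(k-1)`-tuples adjacent to all of them form a
`(k-1)`-partite `(k-1)`-graph without `K_{t,…,t}`; double counting therefore gives
`∑ₑ d(e)(d(e) - 1)⋯(d(e) - t + 1) ≤ n^t · ex_{k-1}`. Since
`d^t ≤ d(d - 1)⋯(d - t + 1) + t(t - 1) d^(t-1)`, this bounds `∑ₑ d(e)^t`, and the power mean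
inequality `|E|^t = (∑ₑ d(e))^t ≤ (n^(k-1))^(t-1) ∑ₑ d(e)^t` yields the claim after taking
`t`-th roots.
-/

open Finset

lemma Nat.pow_succ_le_descFactorial_add (d t : ℕ) :
    d ^ (t + 1) ≤ d.descFactorial (t + 1) + t * (t + 1) * d ^ t := by
  induction t with
  | zero => simp
  | succ t ih =>
    have hstep :
        d * d.descFactorial (t + 1) ≤ d.descFactorial (t + 2) + (t + 1) * d ^ (t + 1) := by
      rw [Nat.descFactorial_succ d (t + 1)]
      calc d * d.descFactorial (t + 1)
          ≤ (d - (t + 1) + (t + 1)) * d.descFactorial (t + 1) := by gcongr; omega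
        _ = (d - (t + 1)) * d.descFactorial (t + 1) + (t + 1) * d.descFactorial (t + 1) :=
            add_mul _ _ _
        _ ≤ (d - (t + 1)) * d.descFactorial (t + 1) + (t + 1) * d ^ (t + 1) := by
            gcongr; exact d.descFactorial_le_pow _
    calc d ^ (t + 2) = d * d ^ (t + 1) := by ring
      _ ≤ d * (d.descFactorial (t + 1) + t * (t + 1) * d ^ t) := by gcongr
      _ = d * d.descFactorial (t + 1) + t * (t + 1) * d ^ (t + 1) := by ring
      _ ≤ d.descFactorial (t + 2) + (t + 1) * d ^ (t + 1) + t * (t + 1) * d ^ (t + 1) := by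
          gcongr
      _ = d.descFactorial (t + 2) + (t + 1) * (t + 1) * d ^ (t + 1) := by ring
      _ ≤ d.descFactorial (t + 2) + (t + 1) * (t + 2) * d ^ (t + 1) := by gcongr; omega

lemma card_filter_embedding_forall_mem {α β : Type*} [Fintype α] [Fintype β] [DecidableEq β]
    (D : Finset β) :
    #{f : α ↪ β | ∀ a, f a ∈ D} = (#D).descFactorial (Fintype.card α) := by
  rw [← Fintype.card_subtype]
  exact (Fintype.card_congr (Equiv.codRestrict α (D : Set β))).trans
    (by simp [Fintype.card_embedding_eq])

namespace PartiteHypergraph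

variable {n k t : ℕ}

lemma exPartite_bddAbove (n k t : ℕ) :
    BddAbove {c | ∃ E : Finset (Fin k → Fin n), ¬ HasGridCopy n k t E ∧ c = #E} :=
  ⟨Fintype.card (Fin k → Fin n), by rintro c ⟨E, -, rfl⟩; exact card_le_univ E⟩

lemma card_le_exPartite {E : Finset (Fin k → Fin n)} (hE : ¬ HasGridCopy n k t E) :
    #E ≤ exPartite n k t :=
  le_csSup (exPartite_bddAbove n k t) ⟨E, hE, rfl⟩

lemma exists_card_eq_exPartite (ht : 0 < t) :
    ∃ E : Finset (Fin k → Fin n), ¬ HasGridCopy n k t E ∧ exPartite n k t = #E := by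
  have hempty : ¬ HasGridCopy n k t ∅ := fun ⟨_, _, hβ⟩ => notMem_empty _ (hβ fun _ => ⟨0, ht⟩)
  exact Nat.sSup_mem (s := {c | ∃ E : Finset (Fin k → Fin n), ¬ HasGridCopy n k t E ∧ c = #E})
    ⟨0, ∅, hempty, rfl⟩ (exPartite_bddAbove n k t)

def link (E : Finset (Fin (k + 1) → Fin n)) (e : Fin k → Fin n) : Finset (Fin n) :=
  {v | Fin.snoc e v ∈ E}

def commonLink (E : Finset (Fin (k + 1) → Fin n)) (s : Fin t ↪ Fin n) :
    Finset (Fin k → Fin n) :=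
  {e | ∀ j, Fin.snoc e (s j) ∈ E}

lemma card_eq_sum_card_link (E : Finset (Fin (k + 1) → Fin n)) :
    #E = ∑ e, #(link E e) := by
  calc #E = ∑ x, if x ∈ E then 1 else 0 := by simp
    _ = ∑ p : Fin n × (Fin k → Fin n), if Fin.snoc p.2 p.1 ∈ E then 1 else 0 :=
      (Fintype.sum_equiv (Fin.snocEquiv fun _ => Fin n) _ _ fun _ => rfl).symm
    _ = ∑ e, #(link E e) := by
      rw [Fintype.sum_prod_type, sum_comm]
      simp [link]

lemma not_hasGridCopy_commonLink {E : Finset (Fin (k + 1) → Fin n)}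
    (hE : ¬ HasGridCopy n (k + 1) t E) (s : Fin t ↪ Fin n) :
    ¬ HasGridCopy n k t (commonLink E s) := by
  rintro ⟨α, hα, hmem⟩
  refine hE ⟨Fin.snoc α s, Fin.lastCases (by simpa using s.injective) (by simpa using hα), ?_⟩
  intro β
  have hβ : (fun i => (Fin.snoc α s : Fin (k + 1) → Fin t → Fin n) i (β i)) =
      Fin.snoc (fun j => α j (β j.castSucc)) (s (β (Fin.last k))) := by
    ext i
    refine Fin.lastCases ?_ (fun j => ?_) i <;> simp
  rw [hβ]
  exact (mem_filter.mp (hmem fun j => β j.castSucc)).2 _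

lemma sum_card_commonLink (E : Finset (Fin (k + 1) → Fin n)) :
    ∑ s : Fin t ↪ Fin n, #(commonLink E s) = ∑ e, (#(link E e)).descFactorial t := by
  simp only [commonLink, card_filter]
  rw [sum_comm]
  refine sum_congr rfl fun e _ => ?_
  rw [← card_filter]
  simpa [link] using card_filter_embedding_forall_mem (α := Fin t) (link E e)

lemma sum_descFactorial_card_link_le {E : Finset (Fin (k + 1) → Fin n)}
    (hE : ¬ HasGridCopy n (k + 1) t E) :
    ∑ e, (#(link E e)).descFactorial t ≤ n ^ t * exPartite n k t := by
  rw [← sum_card_commonLink]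
  calc ∑ s : Fin t ↪ Fin n, #(commonLink E s)
      ≤ ∑ _s : Fin t ↪ Fin n, exPartite n k t :=
        sum_le_sum fun s _ => card_le_exPartite (not_hasGridCopy_commonLink hE s)
    _ = n.descFactorial t * exPartite n k t := by simp [Fintype.card_embedding_eq]
    _ ≤ n ^ t * exPartite n k t := by gcongr; exact n.descFactorial_le_pow t

lemma sum_card_link_pow_le {E : Finset (Fin (k + 1) → Fin n)}
    (hE : ¬ HasGridCopy n (k + 1) (t + 1) E) :
    ∑ e, #(link E e) ^ (t + 1) ≤
      n ^ (t + 1) * exPartite n k (t + 1) + t * (t + 1) * n ^ (k + t) := by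
  have hlink (e : Fin k → Fin n) : #(link E e) ≤ n :=
    (card_le_univ _).trans_eq (Fintype.card_fin n)
  calc ∑ e, #(link E e) ^ (t + 1)
      ≤ ∑ e, ((#(link E e)).descFactorial (t + 1) + t * (t + 1) * #(link E e) ^ t) :=
        sum_le_sum fun e _ => Nat.pow_succ_le_descFactorial_add _ t
    _ = ∑ e, (#(link E e)).descFactorial (t + 1) + t * (t + 1) * ∑ e, #(link E e) ^ t := by
        rw [sum_add_distrib, mul_sum]
    _ ≤ n ^ (t + 1) * exPartite n k (t + 1) + t * (t + 1) * ∑ _e : Fin k → Fin n, n ^ t := by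
        gcongr with e
        · exact sum_descFactorial_card_link_le hE
        · exact hlink e
    _ = n ^ (t + 1) * exPartite n k (t + 1) + t * (t + 1) * n ^ (k + t) := by simp [pow_add]

lemma card_pow_le {E : Finset (Fin (k + 2) → Fin n)} (hE : ¬ HasGridCopy n (k + 2) (t + 1) E) :
    #E ^ (t + 1) ≤
      (exPartite n (k + 1) (t + 1) + (t + 1) * t * n ^ k) * n ^ ((k + 1) * t + (t + 1)) := by
  calc #E ^ (t + 1) = (∑ e, #(link E e)) ^ (t + 1) := by rw [card_eq_sum_card_link]
    _ ≤ (n ^ (k + 1)) ^ t * ∑ e, #(link E e) ^ (t + 1) := by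
        simpa using pow_sum_le_card_mul_sum_pow (s := univ) (f := fun e => #(link E e))
          (fun _ _ => Nat.zero_le _) t
    _ ≤ (n ^ (k + 1)) ^ t *
          (n ^ (t + 1) * exPartite n (k + 1) (t + 1) + t * (t + 1) * n ^ (k + 1 + t)) := by
        gcongr
        exact sum_card_link_pow_le hE
    _ = (exPartite n (k + 1) (t + 1) + (t + 1) * t * n ^ k) * n ^ ((k + 1) * t + (t + 1)) := by
        ring

end PartiteHypergraph

open PartiteHypergraph

lemma Real.le_rpow_mul_rpow_of_pow_le {x b c : ℝ} {m e : ℕ} (hx : 0 ≤ x) (hb : 0 ≤ b)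
    (hc : 0 ≤ c) (hm : m ≠ 0) (h : x ^ m ≤ b * c ^ e) :
    x ≤ b ^ ((1 : ℝ) / m) * c ^ ((e : ℝ) / m) :=
  calc x = (x ^ m) ^ (m⁻¹ : ℝ) := (Real.pow_rpow_inv_natCast hx hm).symm
    _ ≤ (b * c ^ e) ^ (m⁻¹ : ℝ) := by gcongr
    _ = b ^ ((1 : ℝ) / m) * c ^ ((e : ℝ) / m) := by
        rw [Real.mul_rpow hb (by positivity), ← Real.rpow_natCast c, ← Real.rpow_mul hc, one_div,
          div_eq_mul_inv]

theorem stmt3_general (n k t : ℕ) (hk : 2 ≤ k) (ht : 1 ≤ t) :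
    (exPartite n k t : ℝ) ≤
      ((exPartite n (k - 1) t : ℝ) + (t : ℝ) * ((t : ℝ) - 1) * (n : ℝ) ^ (k - 2))
          ^ ((1 : ℝ) / t)
        * (n : ℝ) ^ ((k : ℝ) - ((k : ℝ) - 1) / t) := by
  obtain ⟨k, rfl⟩ : ∃ k', k = k' + 2 := ⟨k - 2, by omega⟩
  obtain ⟨t, rfl⟩ : ∃ t', t = t' + 1 := ⟨t - 1, by omega⟩
  obtain ⟨E, hE, hcard⟩ := exists_card_eq_exPartite (n := n) (k := k + 2) t.succ_pos
  have hsub : ((t + 1 : ℕ) : ℝ) - 1 = t := by push_cast; ring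
  have hexp : ((k + 2 : ℕ) : ℝ) - (((k + 2 : ℕ) : ℝ) - 1) / (t + 1 : ℕ)
      = (((k + 1) * t + (t + 1) : ℕ) : ℝ) / (t + 1 : ℕ) := by
    field_simp
    push_cast
    ring
  rw [hcard, hexp, hsub, show k + 2 - 1 = k + 1 by omega, Nat.add_sub_cancel]
  exact Real.le_rpow_mul_rpow_of_pow_le (by positivity) (by positivity) (by positivity)
    t.succ_ne_zero (by exact_mod_cast card_pow_le hE)

/-- Erdős' recursive bound for partite extremal numbers. -/
theorem stmt3 (n k t : ℕ) (hk : 2 ≤ k) (ht : 1 ≤ t) (htn : t ≤ n) :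
    (exPartite n k t : ℝ) ≤
      ((exPartite n (k - 1) t : ℝ) + (t : ℝ) * ((t : ℝ) - 1) * (n : ℝ) ^ (k - 2))
          ^ ((1 : ℝ) / t)
        * (n : ℝ) ^ ((k : ℝ) - ((k : ℝ) - 1) / t) :=
  stmt3_general n k t hk ht
end

section
/- For every $n \in \mathbb{N}$ and every $k, t \in \mathbb{N}_+$ with $k \ge 2$, the partite extremal number satisfies $\mathrm{ex}_{k\text{-part}}(n, K^{(k)}_{t,\ldots,t}) \le 2 k \cdot n^{k - 1/t^{k-1}}$; and for $k = 1$, $\mathrm{ex}_{1\text{-part}}(n, K^{(1)}_t) \le t - 1$. -/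
open Finset

section Link

variable {n m t : ℕ}

def link (E : Finset (Fin (m + 1) → Fin n)) (f : Fin m → Fin n) : Finset (Fin n) :=
  {v | Fin.snoc f v ∈ E}

def commonLink (E : Finset (Fin (m + 1) → Fin n)) (s : Fin t → Fin n) :
    Finset (Fin m → Fin n) :=
  {f | ∀ j, Fin.snoc f (s j) ∈ E}

theorem sum_card_link (E : Finset (Fin (m + 1) → Fin n)) :
    ∑ f, #(link E f) = #E := by
  calc ∑ f, #(link E f)
      = ∑ p : Fin n × (Fin m → Fin n),
          if Fin.snocEquiv (fun _ => Fin n) p ∈ E then 1 else 0 := by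
        simp only [link, card_filter, Fintype.sum_prod_type]
        exact sum_comm
    _ = #E := by
        rw [(Fin.snocEquiv _).sum_comp fun x => if x ∈ E then 1 else 0]
        simp

theorem sum_card_link_pow (E : Finset (Fin (m + 1) → Fin n)) (t : ℕ) :
    ∑ f, #(link E f) ^ t = ∑ s : Fin t → Fin n, #(commonLink E s) := by
  have hpow (f : Fin m → Fin n) :
      #(link E f) ^ t = #{s : Fin t → Fin n | ∀ j, s j ∈ link E f} := by
    rw [← Fintype.card_piFinset_const]
    congr 1
    ext s
    simp
  simp only [hpow, card_filter, commonLink]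
  rw [sum_comm]
  simp [link]

theorem HasGridCopy.of_commonLink {E : Finset (Fin (m + 1) → Fin n)} {s : Fin t → Fin n}
    (hs : Function.Injective s) (h : HasGridCopy n m t (commonLink E s)) :
    HasGridCopy n (m + 1) t E := by
  obtain ⟨α, hα, hgrid⟩ := h
  refine ⟨Fin.snoc α s, Fin.lastCases (by simpa) (by simpa), fun β => ?_⟩
  have hβ : (fun i => (Fin.snoc α s : Fin (m + 1) → Fin t → Fin n) i (β i)) =
      Fin.snoc (fun i => α i (β i.castSucc)) (s (β (Fin.last m))) := by
    ext i
    induction i using Fin.lastCases <;> simp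
  have := hgrid (fun i => β i.castSucc)
  simp only [commonLink, mem_filter, mem_univ, true_and] at this
  exact hβ ▸ this _

end Link

theorem card_filter_not_injective_le (n t : ℕ) :
    #{s : Fin t → Fin n | ¬ Function.Injective s} ≤ t ^ 2 * n ^ (t - 1) := by
  have hcover : ({s : Fin t → Fin n | ¬ Function.Injective s} : Finset _) ⊆
      (univ : Finset (Fin t)).offDiag.biUnion
        fun p => ({s : Fin t → Fin n | s p.1 = s p.2} : Finset _) := by
    intro s hs
    obtain ⟨i, j, hij, hne⟩ := Function.not_injective_iff.mp (mem_filter.mp hs).2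
    exact mem_biUnion.mpr ⟨(i, j), by simpa using hne, by simpa using hij⟩
  have hfiber (p) (hp : p ∈ (univ : Finset (Fin t)).offDiag) :
      #{s : Fin t → Fin n | s p.1 = s p.2} ≤ n ^ (t - 1) := by
    have hne : p.2 ≠ p.1 := ((mem_offDiag.mp hp).2.2).symm
    calc #{s : Fin t → Fin n | s p.1 = s p.2}
        ≤ #(univ : Finset ({i // i ≠ p.1} → Fin n)) := by
          refine card_le_card_of_injOn (fun s i => s i) (fun _ _ => mem_univ _) ?_
          intro s hs s' hs' h
          simp only [coe_filter, mem_univ, true_and, Set.mem_ofPred_eq] at hs hs'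
          funext i
          by_cases hi : i = p.1
          · subst hi
            rw [hs, hs']
            exact congrFun h ⟨p.2, hne⟩
          · exact congrFun h ⟨i, hi⟩
      _ = n ^ (t - 1) := by simp
  calc #{s : Fin t → Fin n | ¬ Function.Injective s}
      ≤ ∑ p ∈ (univ : Finset (Fin t)).offDiag, #{s : Fin t → Fin n | s p.1 = s p.2} :=
        (card_le_card hcover).trans card_biUnion_le
    _ ≤ #(univ : Finset (Fin t)).offDiag * n ^ (t - 1) := sum_le_card_nsmul _ _ _ hfiber
    _ ≤ t ^ 2 * n ^ (t - 1) := by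
        gcongr
        simp [offDiag_card, sq]

section ExtremalNumber

variable {n k t : ℕ}

theorem bddAbove_card_gridFree :
    BddAbove {c | ∃ E : Finset (Fin k → Fin n), ¬ HasGridCopy n k t E ∧ c = #E} :=
  ⟨n ^ k, by rintro _ ⟨E, -, rfl⟩; simpa using card_le_univ E⟩

theorem card_le_exPartite {E : Finset (Fin k → Fin n)} (hE : ¬ HasGridCopy n k t E) :
    #E ≤ exPartite n k t :=
  le_csSup bddAbove_card_gridFree ⟨E, hE, rfl⟩

theorem exPartite_le {c : ℕ}
    (h : ∀ E : Finset (Fin k → Fin n), ¬ HasGridCopy n k t E → #E ≤ c) :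
    exPartite n k t ≤ c :=
  csSup_le' <| by rintro _ ⟨E, hE, rfl⟩; exact h E hE

theorem exists_card_eq_exPartite (ht : 1 ≤ t) :
    ∃ E : Finset (Fin k → Fin n), ¬ HasGridCopy n k t E ∧ #E = exPartite n k t := by
  have : Nonempty (Fin k → Fin t) := ⟨fun _ => ⟨0, ht⟩⟩
  have hempty : ¬ HasGridCopy n k t ∅ := fun ⟨_, _, h⟩ => by
    simpa using h (Classical.arbitrary _)
  have hmem : exPartite n k t ∈
      {c | ∃ E : Finset (Fin k → Fin n), ¬ HasGridCopy n k t E ∧ c = #E} :=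
    Nat.sSup_mem ⟨0, ∅, hempty, rfl⟩ bddAbove_card_gridFree
  obtain ⟨E, hE, h⟩ := hmem
  exact ⟨E, hE, h.symm⟩

end ExtremalNumber

theorem hasGridCopy_one_of_le_card {n t : ℕ} {E : Finset (Fin 1 → Fin n)} (h : t ≤ #E) :
    HasGridCopy n 1 t E := by
  obtain ⟨g⟩ : Nonempty (Fin t ↪ E) := Function.Embedding.nonempty_of_card_le (by simpa)
  refine ⟨fun i j => (g j).1 i, fun i a b hab => g.injective (Subtype.ext ?_), fun β => ?_⟩
  · funext i'
    rwa [Subsingleton.elim i' i]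
  · convert (g (β 0)).2 using 1
    funext i
    rw [Subsingleton.elim i 0]

theorem exPartite_one_le (n t : ℕ) : exPartite n 1 t ≤ t - 1 :=
  exPartite_le fun _ hE => by
    by_contra! h
    exact hE (hasGridCopy_one_of_le_card (by omega))

section Recursion

variable {n m t : ℕ}

theorem sum_card_commonLink_le {E : Finset (Fin (m + 1) → Fin n)}
    (hE : ¬ HasGridCopy n (m + 1) t E) :
    ∑ s : Fin t → Fin n, #(commonLink E s) ≤
      n ^ t * exPartite n m t + t ^ 2 * n ^ (t - 1) * n ^ m := by
  rw [← sum_filter_add_sum_filter_not univ (Function.Injective : (Fin t → Fin n) → Prop)]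
  gcongr
  · calc ∑ s with Function.Injective s, #(commonLink E s)
        ≤ #{s : Fin t → Fin n | Function.Injective s} * exPartite n m t :=
          sum_le_card_nsmul _ _ _ fun s hs =>
            card_le_exPartite fun h => hE (h.of_commonLink (mem_filter.mp hs).2)
      _ ≤ n ^ t * exPartite n m t := by
          gcongr
          simpa using card_filter_le univ (Function.Injective : (Fin t → Fin n) → Prop)
  · calc ∑ s with ¬ Function.Injective s, #(commonLink E s)
        ≤ #{s : Fin t → Fin n | ¬ Function.Injective s} * n ^ m :=
          sum_le_card_nsmul _ _ _ fun s _ => by simpa using card_le_univ (commonLink E s)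
      _ ≤ t ^ 2 * n ^ (t - 1) * n ^ m := by
          gcongr
          exact card_filter_not_injective_le n t

theorem card_pow_le_of_not_hasGridCopy (ht : 1 ≤ t) {E : Finset (Fin (m + 1) → Fin n)}
    (hE : ¬ HasGridCopy n (m + 1) t E) :
    #E ^ t ≤ (n ^ m) ^ (t - 1) * (n ^ t * exPartite n m t + t ^ 2 * n ^ (t - 1) * n ^ m) := by
  obtain ⟨t, rfl⟩ := Nat.exists_eq_add_of_le' ht
  calc #E ^ (t + 1) = (∑ f, #(link E f)) ^ (t + 1) := by rw [sum_card_link]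
    _ ≤ (n ^ m) ^ t * ∑ f, #(link E f) ^ (t + 1) := by
        simpa using pow_sum_le_card_mul_sum_pow (s := (univ : Finset (Fin m → Fin n)))
          (fun f _ => Nat.zero_le (#(link E f))) t
    _ ≤ _ := by
        rw [sum_card_link_pow, Nat.add_sub_cancel]
        exact Nat.mul_le_mul_left _ (sum_card_commonLink_le hE)

theorem exPartite_succ_pow_le (ht : 1 ≤ t) :
    exPartite n (m + 1) t ^ t ≤
      (n ^ m) ^ (t - 1) * (n ^ t * exPartite n m t + t ^ 2 * n ^ (t - 1) * n ^ m) := by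
  obtain ⟨E, hE, hcard⟩ := exists_card_eq_exPartite (n := n) (k := m + 1) ht
  exact hcard ▸ card_pow_le_of_not_hasGridCopy ht hE

end Recursion

theorem two_mul_add_sq_add_le_pow {m t : ℕ} (hm : 1 ≤ m) (ht : 1 ≤ t) :
    2 * m + t ^ 2 + t ≤ (2 * m + 2) ^ t := by
  induction t, ht using Nat.le_induction with
  | base => simp
  | succ t ht ih =>
    rw [pow_succ (2 * m + 2) t]
    nlinarith

theorem step_bound_le_rpow_pow {N a B : ℝ} {m t : ℕ} (hN : 1 ≤ N) (hm : 1 ≤ m) (ht : 1 ≤ t)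
    (hB : B ≤ a * N ^ ((m : ℝ) - 1 / (t : ℝ) ^ (m - 1)))
    (ha : a + t ^ 2 ≤ (2 * m + 2) ^ t) :
    (N ^ m) ^ (t - 1) * (N ^ t * B + t ^ 2 * N ^ (t - 1) * N ^ m) ≤
      (2 * ((m + 1 : ℕ) : ℝ) * N ^ (((m + 1 : ℕ) : ℝ) - 1 / (t : ℝ) ^ (m + 1 - 1))) ^ t := by
  -- the main term and the target are exactly `N ^ e`; the error term has exponent `(m + 1) t - 1`
  set e : ℝ := ((m : ℝ) + 1) * t - 1 / (t : ℝ) ^ (m - 1) with he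
  have h_main : (N ^ m) ^ (t - 1) * N ^ t * N ^ ((m : ℝ) - 1 / (t : ℝ) ^ (m - 1)) = N ^ e := by
    rw [← pow_mul, ← pow_add, ← Real.rpow_natCast, ← Real.rpow_add (by positivity), he]
    congr 1
    push_cast [Nat.cast_sub ht]
    ring
  have h_error : (N ^ m) ^ (t - 1) * N ^ (t - 1) * N ^ m ≤ N ^ e := by
    rw [← pow_mul, ← pow_add, ← pow_add, ← Real.rpow_natCast]
    apply Real.rpow_le_rpow_of_exponent_le hN
    have : 1 / (t : ℝ) ^ (m - 1) ≤ 1 :=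
      div_le_one_of_le₀ (one_le_pow₀ (by exact_mod_cast ht)) (by positivity)
    rw [he]
    push_cast [Nat.cast_sub ht]
    nlinarith
  have h_target : (N ^ (((m + 1 : ℕ) : ℝ) - 1 / (t : ℝ) ^ (m + 1 - 1))) ^ t = N ^ e := by
    rw [← Real.rpow_natCast, ← Real.rpow_mul (by positivity), he, Nat.add_sub_cancel,
      ← Nat.sub_add_cancel hm, pow_succ]
    congr 1
    field_simp
    push_cast
    ring
  calc (N ^ m) ^ (t - 1) * (N ^ t * B + t ^ 2 * N ^ (t - 1) * N ^ m)
      ≤ (N ^ m) ^ (t - 1) *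
          (N ^ t * (a * N ^ ((m : ℝ) - 1 / (t : ℝ) ^ (m - 1))) + t ^ 2 * N ^ (t - 1) * N ^ m) := by
        gcongr
    _ = a * N ^ e + t ^ 2 * ((N ^ m) ^ (t - 1) * N ^ (t - 1) * N ^ m) := by
        rw [← h_main]
        ring
    _ ≤ a * N ^ e + t ^ 2 * N ^ e := by gcongr
    _ = (a + t ^ 2) * N ^ e := by ring
    _ ≤ (2 * m + 2) ^ t * N ^ e := mul_le_mul_of_nonneg_right ha (by positivity)
    _ = _ := by
        rw [mul_pow, h_target]
        push_cast
        ring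

theorem exPartite_succ_le_rpow {n m t : ℕ} (hm : 1 ≤ m) (ht : 1 ≤ t) {a : ℝ}
    (hex : (exPartite n m t : ℝ) ≤ a * n ^ ((m : ℝ) - 1 / (t : ℝ) ^ (m - 1)))
    (ha : a + t ^ 2 ≤ (2 * m + 2) ^ t) :
    (exPartite n (m + 1) t : ℝ) ≤
      2 * ((m + 1 : ℕ) : ℝ) * n ^ (((m + 1 : ℕ) : ℝ) - 1 / (t : ℝ) ^ (m + 1 - 1)) := by
  rcases Nat.eq_zero_or_pos n with rfl | hn
  · have : exPartite 0 (m + 1) t = 0 :=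
      Nat.eq_zero_of_le_zero (exPartite_le fun E _ => by simp [eq_empty_of_isEmpty E])
    rw [this, Nat.cast_zero]
    positivity
  have hrec : (exPartite n (m + 1) t : ℝ) ^ t ≤ ((n : ℝ) ^ m) ^ (t - 1) *
      ((n : ℝ) ^ t * exPartite n m t + t ^ 2 * (n : ℝ) ^ (t - 1) * (n : ℝ) ^ m) := by
    exact_mod_cast exPartite_succ_pow_le ht
  refine le_of_pow_le_pow_left₀ (n := t) (by omega) (by positivity) ?_
  exact hrec.trans (step_bound_le_rpow_pow (by exact_mod_cast hn) hm ht hex ha)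

theorem exPartite_le_rpow {n k t : ℕ} (hk : 2 ≤ k) (ht : 1 ≤ t) :
    (exPartite n k t : ℝ) ≤ 2 * k * n ^ ((k : ℝ) - 1 / (t : ℝ) ^ (k - 1)) := by
  induction k, hk using Nat.le_induction with
  | base =>
    have hcoef : (2 * 1 + t ^ 2 + t : ℝ) ≤ (2 * 1 + 2) ^ t := by
      exact_mod_cast two_mul_add_sq_add_le_pow le_rfl ht
    refine exPartite_succ_le_rpow (m := 1) le_rfl ht (a := t - 1) ?_ (by push_cast; linarith)
    simpa [Nat.cast_sub ht] using (Nat.cast_le (α := ℝ)).2 (exPartite_one_le n t)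
  | succ m hm ih =>
    have hcoef : (2 * m + t ^ 2 + t : ℝ) ≤ (2 * m + 2) ^ t := by
      exact_mod_cast two_mul_add_sq_add_le_pow (by omega) ht
    exact exPartite_succ_le_rpow (by omega) ht ih (by linarith)

theorem stmt4_general (n k t : ℕ) (ht : 1 ≤ t) :
    (2 ≤ k → (exPartite n k t : ℝ) ≤
      2 * (k : ℝ) * (n : ℝ) ^ ((k : ℝ) - 1 / (t : ℝ) ^ (k - 1))) ∧
    (k = 1 → exPartite n k t ≤ t - 1) :=
  ⟨fun hk => exPartite_le_rpow hk ht, fun hk => hk ▸ exPartite_one_le n t⟩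

/-- Kővári–Sós–Turán / Erdős bound for partite extremal numbers. -/
theorem stmt4 (n k t : ℕ) (hk : 1 ≤ k) (ht : 1 ≤ t) :
    (2 ≤ k → (exPartite n k t : ℝ) ≤
      2 * (k : ℝ) * (n : ℝ) ^ ((k : ℝ) - 1 / (t : ℝ) ^ (k - 1))) ∧
    (k = 1 → exPartite n k t ≤ t - 1) :=
  stmt4_general n k t ht
end

section
/- If $a \ge 1/2$, $b \ge 0$, and $x \ge \frac{2e}{e-1} \cdot a \ln(2a) + 2b$, then $x \ge a \ln x + b$. -/
/-! Applying `log t ≤ t - 1` at `t = x / (2a)` gives `a log x ≤ a log (2a) + x / 2 - a`. Since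
`2e / (e - 1) ≥ 2` and `a log (2a) ≥ 0`, the hypothesis yields `x ≥ 2 a log (2a) + 2b`, which is
what this bound needs. -/

open Real

lemma Real.log_le_log_add_div_sub_one {x y : ℝ} (hx : 0 < x) (hy : 0 < y) :
    log x ≤ log y + x / y - 1 := by
  have h := log_le_sub_one_of_pos (div_pos hx hy)
  rw [log_div hx.ne' hy.ne'] at h
  linarith

lemma two_le_two_mul_exp_one_div_exp_one_sub_one : 2 ≤ 2 * exp 1 / (exp 1 - 1) := by
  have he : 0 < exp 1 - 1 := by linarith [add_one_lt_exp one_ne_zero]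
  rw [le_div_iff₀ he]
  linarith

/-- If `x ≥ (2e/(e-1)) a ln(2a) + 2b` with `a ≥ 1/2`, `b ≥ 0`, then `x ≥ a ln x + b`. -/
theorem stmt8 (a b x : ℝ) (ha : 1 / 2 ≤ a) (hb : 0 ≤ b)
    (hx : 2 * Real.exp 1 / (Real.exp 1 - 1) * (a * Real.log (2 * a)) + 2 * b ≤ x) :
    a * Real.log x + b ≤ x := by
  have ha₀ : 0 < a := by linarith
  have hL : 0 ≤ a * log (2 * a) := mul_nonneg ha₀.le (log_nonneg (by linarith))
  have hx₂ : 2 * (a * log (2 * a)) + 2 * b ≤ x :=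
    le_trans (by gcongr; exact two_le_two_mul_exp_one_div_exp_one_sub_one) hx
  rcases (show 0 ≤ x by linarith).eq_or_lt with rfl | hx₀
  · simp only [log_zero, mul_zero, zero_add]
    linarith
  · have hlog := log_le_log_add_div_sub_one hx₀ (by linarith : 0 < 2 * a)
    have hbound : a * log x ≤ a * log (2 * a) + x / 2 - a := by
      calc a * log x ≤ a * (log (2 * a) + x / (2 * a) - 1) := by gcongr
        _ = a * log (2 * a) + x / 2 - a := by field_simp
    linarith
end

section
/- Let $a, b, c, d \ge 0$ be reals, $t > 0$ real, $k \in \mathbb{N}_+$, and $x \in \mathbb{R}$ satisfy: $t \le k$, $\frac{a k}{t} \ge \frac{1}{4}$, $b \ge 1$, and $x \ge \left(\frac{e}{e-1} \cdot \frac{4 a k}{t} \ln\left(\frac{4 a k}{t}\right) + 4 a c + b\right)^{1/t} + (2d)^{1/k}$. Then $x^k \ge a \cdot x^{k-t} \cdot (\ln(x^k + b) + c) + d$. -/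
/-!
Put `y = x ^ t` and `s = 4 a k / t ≥ 1`. The first summand of the bound on `x` gives `y ≥ A`, with
`A` the quantity under the `1/t`-th root, and the second gives `x ^ k ≥ 2 d`, so it suffices to show
`a (log (x ^ k + b) + c) ≤ y / 2`. Since `b ≤ x ^ k` and `t ≤ k`, `log (x ^ k + b) ≤ (k / t) log (2 y)`,
which reduces the claim to `s log z + 4 a c ≤ z` for `z = 2 y`. That follows from the tangent-line
bound `log (z / s) ≤ z / (e s)`, i.e. `s log z ≤ z / e + s log s`, once `z ≥ e / (e - 1) (s log s + 4 a c)`,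
and this holds because `z ≥ 2 A` and `e / (e - 1) ≤ 2`.
-/

open Real

lemma exp_one_div_exp_one_sub_one_le_two : exp 1 / (exp 1 - 1) ≤ 2 := by
  have he : 2 ≤ exp 1 := by linarith [add_one_le_exp 1]
  rw [div_le_iff₀ (by linarith)]
  linarith

lemma exp_one_div_exp_one_sub_one_pos : 0 < exp 1 / (exp 1 - 1) :=
  div_pos (exp_pos 1) (by linarith [add_one_le_exp 1])

lemma mul_log_le_div_exp_one_add_mul_log {s z : ℝ} (hs : 0 < s) (hz : 0 < z) :
    s * log z ≤ z / exp 1 + s * log s := by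
  have h := log_le_sub_one_of_pos (show 0 < z / (exp 1 * s) by positivity)
  rw [log_div hz.ne' (by positivity), log_mul (exp_pos 1).ne' hs.ne', log_exp] at h
  have hmul := mul_le_mul_of_nonneg_left h hs.le
  rw [show s * (z / (exp 1 * s) - 1) = z / exp 1 - s by field_simp] at hmul
  linarith

lemma mul_log_add_le_of_exp_one_div_mul_le {s z m : ℝ} (hs : 0 < s) (hz : 0 < z)
    (h : exp 1 / (exp 1 - 1) * (s * log s + m) ≤ z) : s * log z + m ≤ z := by
  have he : 0 < exp 1 - 1 := by linarith [add_one_le_exp 1]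
  have h' : exp 1 * (s * log s + m) ≤ (exp 1 - 1) * z := by
    rw [div_mul_eq_mul_div, div_le_iff₀ he] at h
    linarith
  have hsum : s * log s + m + z / exp 1 ≤ z := by
    refine le_of_mul_le_mul_left ?_ (exp_pos 1)
    rw [mul_add, mul_div_cancel₀ _ (exp_pos 1).ne']
    linarith
  linarith [mul_log_le_div_exp_one_add_mul_log hs hz]

lemma log_two_mul_rpow_le {x t k : ℝ} (hx : 0 < x) (ht : 0 < t) (htk : t ≤ k) :
    log (2 * x ^ k) ≤ k / t * log (2 * x ^ t) := by
  have hkt : 1 ≤ k / t := (one_le_div ht).mpr htk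
  have hlog2 : 0 ≤ log 2 := log_nonneg one_le_two
  rw [log_mul two_ne_zero (rpow_pos_of_pos hx k).ne', log_mul two_ne_zero (rpow_pos_of_pos hx t).ne',
    log_rpow hx, log_rpow hx, mul_add, ← mul_assoc, div_mul_cancel₀ _ ht.ne']
  linarith [mul_le_mul_of_nonneg_right hkt hlog2]

lemma le_rpow_of_rpow_one_div_le {A x t : ℝ} (hA : 0 ≤ A) (ht : 0 < t) (h : A ^ (1 / t) ≤ x) :
    A ≤ x ^ t := by
  rw [one_div] at h
  exact (rpow_inv_le_iff_of_pos hA ((rpow_nonneg hA _).trans h) ht).mp h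

lemma mul_log_rpow_add_add_le_half {a b c t k x : ℝ} (ha : 0 ≤ a) (hb : 0 ≤ b) (hc : 0 ≤ c)
    (ht : 0 < t) (htk : t ≤ k) (hx : 0 < x) (hbx : b ≤ x ^ k) (hs : 1 ≤ 4 * a * k / t)
    (hA : exp 1 / (exp 1 - 1) * (4 * a * k / t) * log (4 * a * k / t) + 4 * a * c ≤ x ^ t) :
    a * (log (x ^ k + b) + c) ≤ x ^ t / 2 := by
  set s := 4 * a * k / t with hs_def
  have hslog : 0 ≤ exp 1 / (exp 1 - 1) * s * log s := by
    rw [mul_assoc]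
    exact mul_nonneg exp_one_div_exp_one_sub_one_pos.le (mul_nonneg (by linarith) (log_nonneg hs))
  have hlog : log (x ^ k + b) ≤ k / t * log (2 * x ^ t) :=
    (log_le_log (by positivity) (by linarith)).trans (log_two_mul_rpow_le hx ht htk)
  have hkey : s * log (2 * x ^ t) + 4 * a * c ≤ 2 * x ^ t := by
    refine mul_log_add_le_of_exp_one_div_mul_le (by linarith) (by positivity) ?_
    have hac := mul_le_mul_of_nonneg_right exp_one_div_exp_one_sub_one_le_two (mul_nonneg ha hc)
    linarith
  have hs4 : a * (k / t * log (2 * x ^ t)) = s / 4 * log (2 * x ^ t) := by rw [hs_def]; ring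
  linarith [mul_le_mul_of_nonneg_left hlog ha]

theorem stmt9_general (a b c d t x : ℝ) (k : ℕ)
    (ha : 0 ≤ a) (hb : 1 ≤ b) (hc : 0 ≤ c) (hd : 0 ≤ d)
    (ht : 0 < t) (htk : t ≤ (k : ℝ)) (hak : 1 / 4 ≤ a * k / t)
    (hx : (Real.exp 1 / (Real.exp 1 - 1) * (4 * a * k / t) * Real.log (4 * a * k / t)
        + 4 * a * c + b) ^ (1 / t) + (2 * d) ^ (1 / (k : ℝ)) ≤ x) :
    a * x ^ ((k : ℝ) - t) * (Real.log (x ^ (k : ℝ) + b) + c) + d ≤ x ^ (k : ℝ) := by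
  have hs : 1 ≤ 4 * a * k / t := by rw [mul_assoc, mul_div_assoc]; linarith
  set A := exp 1 / (exp 1 - 1) * (4 * a * k / t) * log (4 * a * k / t) + 4 * a * c + b
  have hbA : b ≤ A := by
    have := mul_nonneg (mul_nonneg exp_one_div_exp_one_sub_one_pos.le (by linarith : 0 ≤ 4 * a * k / t))
      (log_nonneg hs)
    linarith [mul_nonneg ha hc]
  have hAx : A ^ (1 / t) ≤ x := by linarith [rpow_nonneg (by linarith : 0 ≤ 2 * d) (1 / (k : ℝ))]
  have hdx : (2 * d) ^ (1 / (k : ℝ)) ≤ x := by linarith [rpow_nonneg (by linarith : 0 ≤ A) (1 / t)]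
  have hx1 : 1 ≤ x := (one_le_rpow (by linarith) (by positivity)).trans hAx
  have hAy : A ≤ x ^ t := le_rpow_of_rpow_one_div_le (by linarith) ht hAx
  have hdk : 2 * d ≤ x ^ (k : ℝ) := le_rpow_of_rpow_one_div_le (by linarith) (ht.trans_le htk) hdx
  have hyk : x ^ t ≤ x ^ (k : ℝ) := rpow_le_rpow_of_exponent_le hx1 htk
  have hhalf : a * (log (x ^ (k : ℝ) + b) + c) ≤ x ^ t / 2 :=
    mul_log_rpow_add_add_le_half ha (by linarith) hc ht htk (by linarith) (by linarith) hs (by linarith)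
  have hsplit : x ^ (k : ℝ) = x ^ ((k : ℝ) - t) * x ^ t := by
    rw [← rpow_add (by linarith), sub_add_cancel]
  linarith [mul_le_mul_of_nonneg_left hhalf (rpow_nonneg (by linarith : 0 ≤ x) ((k : ℝ) - t))]

/-- Inversion lemma for sample-complexity bounds. -/
theorem stmt9 (a b c d t x : ℝ) (k : ℕ) (hk : 1 ≤ k)
    (ha : 0 ≤ a) (hb : 1 ≤ b) (hc : 0 ≤ c) (hd : 0 ≤ d)
    (ht : 0 < t) (htk : t ≤ (k : ℝ)) (hak : 1 / 4 ≤ a * k / t)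
    (hx : (Real.exp 1 / (Real.exp 1 - 1) * (4 * a * k / t) * Real.log (4 * a * k / t)
        + 4 * a * c + b) ^ (1 / t) + (2 * d) ^ (1 / (k : ℝ)) ≤ x) :
    a * x ^ ((k : ℝ) - t) * (Real.log (x ^ (k : ℝ) + b) + c) + d ≤ x ^ (k : ℝ) :=
  stmt9_general a b c d t x k ha hb hc hd ht htk hak hx
end
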